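/- arXiv:1110.1062 — 6 statements merged into one kernel-verified Lean document; each statement's English description precedes it below -/
import Mathlib

section
/- For every positive integer k, the integral from 0 to 1 of (1-x)(k+1-x)^{k-1}/k! with respect to x equals k^k/(k+1)!. -/
/-! Substituting `y = k + 1 - x` turns the integrand `(1 - x)(k + 1 - x)^(k-1)` into
`y^k - k y^(k-1)` on `[k, k + 1]`; the two power integrals telescope to `k^k / (k + 1)`. -/

open intervalIntegral in
theorem integral_one_sub_mul_add_one_sub_pow (c : ℝ) (n : ℕ) :
    ∫ x in (0:ℝ)..1, (1 - x) * (c + 1 - x) ^ n =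
      ((c + 1) ^ (n + 2) - c ^ (n + 2)) / (n + 2) -
        c * ((c + 1) ^ (n + 1) - c ^ (n + 1)) / (n + 1) := by
  calc ∫ x in (0:ℝ)..1, (1 - x) * (c + 1 - x) ^ n
      = ∫ x in (0:ℝ)..1, ((c + 1 - x) ^ (n + 1) - c * (c + 1 - x) ^ n) := by
        congr 1; ext x; ring
    _ = ∫ y in c + 1 - 1..c + 1 - 0, (y ^ (n + 1) - c * y ^ n) :=
        integral_comp_sub_left (fun y => y ^ (n + 1) - c * y ^ n) (c + 1)
    _ = (∫ y in c..c + 1, y ^ (n + 1)) - c * ∫ y in c..c + 1, y ^ n := by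
        rw [add_sub_cancel_right, sub_zero, integral_sub (intervalIntegrable_pow _)
          ((intervalIntegrable_pow _).const_mul c), integral_const_mul]
    _ = _ := by
        rw [integral_pow, integral_pow]
        push_cast
        ring

/-- For every positive integer `k`,
`∫₀¹ (1-x)(k+1-x)^(k-1)/k! dx = k^k/(k+1)!`. -/
theorem stmt0 (k : ℕ) (hk : 1 ≤ k) :
    ∫ x in (0:ℝ)..1, (1 - x) * ((k : ℝ) + 1 - x) ^ (k - 1) / (Nat.factorial k) =
      (k : ℝ) ^ k / (Nat.factorial (k + 1)) := by
  obtain ⟨n, rfl⟩ := Nat.exists_eq_add_of_le' hk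
  rw [intervalIntegral.integral_div, Nat.add_sub_cancel, integral_one_sub_mul_add_one_sub_pow,
    Nat.factorial_succ (n + 1)]
  push_cast
  field_simp
  ring
end

section
/- Define G_0(x) = 1 and, for n ≥ 1, G_{2n}(x) = ∑_{k=1}^{n} G_{2(n-k)}(x) · ∫_0^{1-x} G_{2(k-1)}(y) dy. Then for all n ≥ 0 and all x ∈ [0,1], G_{2n}(x) = (1-x)(n+1-x)^{n-1}/n!. -/
/-!
With `A = abelPoly`, `A n t = t (t + n)^{n-1} / n!`, `A 0 = 1` (normalised Abel polynomials),
one has `d/dt A (n+1) t = A n (t + 1)` and `A (n+1) 0 = 0`. By induction on `n`, both sides of the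
convolution identity `A n (s + t) = ∑ₖ A k s · A (n-k) t` then have the same `t`-derivative and
agree at `t = 0`. Moreover `∫₀^{1-x} A k (1 - y) dy = -A (k+1) (x - 1)`, so the convolution
identity at `s + t = 0` is exactly the recursion defining `G`, whence `G n x = A n (1 - x)`.
-/

/-- `G 0 x = 1` and
`G n x = ∑_{k=1}^{n} G (n-k) x · ∫₀^{1-x} G (k-1) y dy` (here the sum is
reindexed by `k ↦ k+1` over `Finset.range n`), where `G n` stands for the
paper's `G_{2n}`. -/
noncomputable def G : ℕ → ℝ → ℝ
  | 0, _ => 1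
  | (n + 1), x =>
      ∑ k ∈ (Finset.range (n + 1)).attach,
        G (n - k.1) x * ∫ y in (0:ℝ)..(1 - x), G k.1 y
  termination_by n => n
  decreasing_by
  · exact Nat.lt_succ_of_le (Nat.sub_le _ _)
  · exact Nat.lt_succ_of_le (Nat.lt_succ_iff.mp (Finset.mem_range.mp k.2))

open Finset

noncomputable def abelPoly : ℕ → ℝ → ℝ
  | 0, _ => 1
  | n + 1, t => t * (t + (n + 1)) ^ n / (n + 1).factorial

namespace abelPoly

@[simp]
lemma zero_left (t : ℝ) : abelPoly 0 t = 1 := rfl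

@[simp]
lemma succ_zero_right (n : ℕ) : abelPoly (n + 1) 0 = 0 := by
  simp [abelPoly]

lemma hasDerivAt_succ (n : ℕ) (t : ℝ) :
    HasDerivAt (abelPoly (n + 1)) (abelPoly n (t + 1)) t := by
  have h := ((hasDerivAt_id' t).fun_mul
    (((hasDerivAt_id' t).add_const ((n : ℝ) + 1)).fun_pow n)).div_const ((n + 1).factorial : ℝ)
  refine h.congr_deriv ?_
  cases n with
  | zero => simp [abelPoly]
  | succ m =>
    simp only [abelPoly, Nat.factorial_succ, Nat.cast_mul, Nat.cast_add, Nat.cast_one,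
      add_tsub_cancel_right]
    field_simp
    ring

lemma continuous (n : ℕ) : Continuous (abelPoly n) := by
  cases n with
  | zero => exact continuous_const
  | succ n => unfold abelPoly; fun_prop

lemma apply_add (n : ℕ) (s t : ℝ) :
    abelPoly n (s + t) = ∑ k ∈ range (n + 1), abelPoly k s * abelPoly (n - k) t := by
  induction n generalizing t with
  | zero => simp
  | succ n ih =>
    have hsum : ∑ k ∈ range (n + 2), abelPoly k s * abelPoly (n + 1 - k) t =
        ∑ k ∈ range (n + 1), abelPoly k s * abelPoly (n - k + 1) t + abelPoly (n + 1) s := by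
      rw [sum_range_succ, Nat.sub_self, zero_left, mul_one]
      congr 1
      refine sum_congr rfl fun k hk => ?_
      rw [Nat.sub_add_comm (Nat.le_of_lt_succ (mem_range.mp hk))]
    set D : ℝ → ℝ := fun t => ∑ k ∈ range (n + 1), abelPoly k s * abelPoly (n - k + 1) t +
      abelPoly (n + 1) s - abelPoly (n + 1) (s + t) with hD
    have hD' (t : ℝ) : HasDerivAt D 0 t := by
      have h := ((HasDerivAt.fun_sum (u := range (n + 1)) fun k _ =>
        (hasDerivAt_succ (n - k) t).const_mul (abelPoly k s)).add_const (abelPoly (n + 1) s)).sub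
        ((hasDerivAt_succ n (s + t)).comp t ((hasDerivAt_id' t).const_add s))
      refine h.congr_deriv ?_
      rw [mul_one, add_assoc, ih, sub_self]
    have hD0 : D 0 = 0 := by simp [hD]
    have hDt : D t = 0 := (is_const_of_deriv_eq_zero (fun t => (hD' t).differentiableAt)
      (fun t => (hD' t).deriv) t 0).trans hD0
    rw [hsum, ← sub_eq_zero.mp hDt]

lemma succ_eq_neg_sum (n : ℕ) (t : ℝ) :
    abelPoly (n + 1) t = -∑ k ∈ range (n + 1), abelPoly (n - k) t * abelPoly (k + 1) (-t) := by
  have h := apply_add (n + 1) (-t) t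
  rw [neg_add_cancel, succ_zero_right, sum_range_succ', zero_left, one_mul, Nat.sub_zero] at h
  simp only [Nat.add_sub_add_right, mul_comm (abelPoly _ (-t))] at h
  linarith

end abelPoly

lemma integral_abelPoly_one_sub (k : ℕ) (b : ℝ) :
    ∫ y in (0 : ℝ)..b, abelPoly k (1 - y) = -abelPoly (k + 1) (-b) := by
  have hderiv (y : ℝ) : HasDerivAt (fun y => -abelPoly (k + 1) (-y)) (abelPoly k (1 - y)) y := by
    have h := ((abelPoly.hasDerivAt_succ k (-y)).comp y (hasDerivAt_neg y)).neg
    refine h.congr_deriv ?_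
    rw [neg_add_eq_sub, mul_neg_one, neg_neg]
  rw [intervalIntegral.integral_eq_sub_of_hasDerivAt (fun y _ => hderiv y)
    (((abelPoly.continuous k).comp (continuous_const.sub continuous_id)).intervalIntegrable _ _)]
  simp

lemma G_succ (n : ℕ) (x : ℝ) :
    G (n + 1) x = ∑ k ∈ range (n + 1), G (n - k) x * ∫ y in (0 : ℝ)..(1 - x), G k y := by
  rw [G, sum_attach (range (n + 1)) fun k => G (n - k) x * ∫ y in (0 : ℝ)..(1 - x), G k y]

lemma G_eq_abelPoly (n : ℕ) (x : ℝ) : G n x = abelPoly n (1 - x) := by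
  induction n using Nat.strong_induction_on generalizing x with
  | _ n ih =>
    cases n with
    | zero => rw [G, abelPoly.zero_left]
    | succ n =>
      rw [G_succ, abelPoly.succ_eq_neg_sum, ← sum_neg_distrib]
      refine sum_congr rfl fun k hk => ?_
      rw [ih (n - k) (Nat.lt_succ_of_le (Nat.sub_le n k)),
        intervalIntegral.integral_congr fun y _ => ih k (mem_range.mp hk) y,
        integral_abelPoly_one_sub, mul_neg]

/-- `G_{2n}(x) = (1-x)(n+1-x)^{n-1}/n!` on `[0,1]` for all `n`
(the `n = 0` case being the convention `G_0 = 1`). -/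
theorem stmt2 :
    (∀ x : ℝ, G 0 x = 1) ∧
    ∀ n : ℕ, 1 ≤ n → ∀ x ∈ Set.Icc (0:ℝ) 1,
      G n x = (1 - x) * ((n : ℝ) + 1 - x) ^ (n - 1) / (Nat.factorial n) := by
  refine ⟨fun x => by rw [G], fun n hn x _ => ?_⟩
  obtain ⟨m, rfl⟩ := Nat.exists_eq_add_of_le' hn
  rw [G_eq_abelPoly, abelPoly, Nat.add_sub_cancel]
  push_cast
  ring
end

section
/- The sequence β_{2k} = k^k/(k+1)! satisfies Carleman's condition: ∑_{k≥1} β_{2k}^{-1/(2k)} = ∞. -/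
/-!
Since `(k + 1)! ≥ 1`, we have `β_{2k} ≤ k^k`, so `β_{2k}^{-1/(2k)} ≥ k^{-1/2} ≥ 1/k`,
and the series diverges by comparison with the harmonic series.
-/

open Filter Finset

theorem tendsto_sum_Icc_atTop_of_one_div_le {f : ℕ → ℝ}
    (hf : ∀ k : ℕ, 1 ≤ k → 1 / (k : ℝ) ≤ f k) :
    Tendsto (fun n => ∑ k ∈ Icc 1 n, f k) atTop atTop := by
  refine tendsto_atTop_mono (fun n => ?_) Real.tendsto_sum_range_one_div_nat_succ_atTop
  rw [← Ico_add_one_right_eq_Icc, sum_Ico_eq_sum_range, Nat.add_sub_cancel]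
  refine sum_le_sum fun i _ => ?_
  simpa [add_comm] using hf (i + 1) (Nat.le_add_left 1 i)

theorem one_div_le_rpow_neg_one_div_two_mul_of_le_pow {x : ℝ} {k : ℕ} (hk : 1 ≤ k)
    (hx₀ : 0 < x) (hx : x ≤ (k : ℝ) ^ k) : 1 / (k : ℝ) ≤ x ^ (-(1 : ℝ) / (2 * k)) := by
  have hk₁ : (1 : ℝ) ≤ k := by exact_mod_cast hk
  have hk₀ : (0 : ℝ) < k := by linarith
  have h_exp : -(1 : ℝ) / (2 * k) ≤ 0 :=
    div_nonpos_of_nonpos_of_nonneg (by norm_num) (by positivity)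
  calc 1 / (k : ℝ) = (k : ℝ) ^ (-(1 : ℝ)) := by rw [Real.rpow_neg_one, one_div]
    _ ≤ (k : ℝ) ^ (-(1 : ℝ) / 2) := Real.rpow_le_rpow_of_exponent_le hk₁ (by norm_num)
    _ = ((k : ℝ) ^ k) ^ (-(1 : ℝ) / (2 * k)) := by
      rw [← Real.rpow_natCast, ← Real.rpow_mul hk₀.le]
      congr 1
      field_simp
    _ ≤ x ^ (-(1 : ℝ) / (2 * k)) := Real.rpow_le_rpow_of_nonpos hx₀ hx h_exp

/-- Carleman's condition for `β_{2k} = k^k/(k+1)!`: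
`∑_{k ≥ 1} β_{2k}^{-1/(2k)} = ∞`. -/
theorem stmt6 :
    Filter.Tendsto (fun n : ℕ => ∑ k ∈ Finset.Icc 1 n,
        ((k : ℝ) ^ k / (Nat.factorial (k + 1))) ^ (-(1 : ℝ) / (2 * k)))
      Filter.atTop Filter.atTop := by
  refine tendsto_sum_Icc_atTop_of_one_div_le fun k hk => ?_
  have hβ₀ : 0 < (k : ℝ) ^ k / (Nat.factorial (k + 1)) := by positivity
  have hβ : (k : ℝ) ^ k / (Nat.factorial (k + 1)) ≤ (k : ℝ) ^ k :=
    div_le_self (by positivity) (by exact_mod_cast Nat.factorial_pos (k + 1))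
  exact one_div_le_rpow_neg_one_div_two_mul_of_le_pow hk hβ₀ hβ
end

section
/- For every k ≥ 1 and x ∈ [0,1], ∫_0^{1-x} (1-y)(k-y)^{k-2}/(k-1)! dy = (1-x)(k-1+x)^{k-1}/k!. -/
/-! For `k = n + 2` the integrand is the derivative of
`((k - y) ^ (n + 1) - (k - y) ^ (n + 2) / k) / (k - 1)!`, a primitive that vanishes at `y = 0`;
its value at `y = 1 - x` factors as `(1 - x) (k - 1 + x) ^ (k - 1) / k!`.
For `k = 1` the integrand is `1` away from the null set `{1}`. -/

open intervalIntegral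

theorem hasDerivAt_one_sub_mul_pow (n : ℕ) (y : ℝ) :
    HasDerivAt (fun y : ℝ => ((n : ℝ) + 2 - y) ^ (n + 1) - ((n : ℝ) + 2 - y) ^ (n + 2) / (n + 2))
      ((1 - y) * ((n : ℝ) + 2 - y) ^ n) y := by
  have hlin : HasDerivAt (fun y : ℝ => (n : ℝ) + 2 - y) (-1) y := by
    simpa using (hasDerivAt_id y).const_sub ((n : ℝ) + 2)
  refine ((hlin.pow (n + 1)).sub ((hlin.pow (n + 2)).div_const ((n : ℝ) + 2))).congr_deriv ?_
  simp only [Nat.add_sub_cancel]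
  push_cast
  field_simp
  ring

theorem integral_one_sub_mul_pow (n : ℕ) (x : ℝ) :
    ∫ y in (0 : ℝ)..(1 - x), (1 - y) * ((n : ℝ) + 2 - y) ^ n =
      (1 - x) * ((n : ℝ) + 1 + x) ^ (n + 1) / (n + 2) := by
  rw [integral_eq_sub_of_hasDerivAt (fun y _ => hasDerivAt_one_sub_mul_pow n y)
    (Continuous.intervalIntegrable (by fun_prop) _ _)]
  field_simp
  ring

theorem integral_one_sub_mul_inv_one_sub (b : ℝ) :
    ∫ y in (0 : ℝ)..b, (1 - y) * (1 - y)⁻¹ = b := by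
  have hae : ∀ᵐ y : ℝ, y ≠ 1 := by
    simp [MeasureTheory.ae_iff]
  rw [integral_congr_ae (g := fun _ => (1 : ℝ)) ?_, integral_const, smul_eq_mul, mul_one, sub_zero]
  filter_upwards [hae] with y hy _
  exact mul_inv_cancel₀ (sub_ne_zero.mpr (Ne.symm hy))

theorem stmt10_general (k : ℕ) (hk : 1 ≤ k) (x : ℝ) :
    ∫ y in (0:ℝ)..(1 - x),
        (1 - y) * ((k : ℝ) - y) ^ ((k : ℤ) - 2) / (Nat.factorial (k - 1)) =
      (1 - x) * ((k : ℝ) - 1 + x) ^ ((k : ℤ) - 1) / (Nat.factorial k) := by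
  rw [intervalIntegral.integral_div]
  obtain rfl | ⟨n, rfl⟩ : k = 1 ∨ ∃ n, k = n + 2 := by
    rcases Nat.lt_or_ge k 2 with h | h
    · exact Or.inl (by omega)
    · exact Or.inr ⟨k - 2, by omega⟩
  · norm_num
    exact integral_one_sub_mul_inv_one_sub (1 - x)
  · have hexp₂ : ((n + 2 : ℕ) : ℤ) - 2 = (n : ℕ) := by push_cast; ring
    have hexp₁ : ((n + 2 : ℕ) : ℤ) - 1 = (n + 1 : ℕ) := by push_cast; ring
    have hpred : n + 2 - 1 = n + 1 := rfl
    simp only [hexp₂, hexp₁, zpow_natCast, hpred, Nat.factorial_succ (n + 1)]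
    push_cast
    rw [integral_one_sub_mul_pow]
    field_simp
    ring

/-- For `k ≥ 1` and `x ∈ [0,1]`,
`∫₀^{1-x} (1-y)(k-y)^(k-2)/(k-1)! dy = (1-x)(k-1+x)^(k-1)/k!`
(the exponents are integer powers, so that the `k = 1` case carries the
convention `G₀ = 1`). -/
theorem stmt10 (k : ℕ) (hk : 1 ≤ k) (x : ℝ) (hx : x ∈ Set.Icc (0:ℝ) 1) :
    ∫ y in (0:ℝ)..(1 - x),
        (1 - y) * ((k : ℝ) - y) ^ ((k : ℤ) - 2) / (Nat.factorial (k - 1)) =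
      (1 - x) * ((k : ℝ) - 1 + x) ^ ((k : ℤ) - 1) / (Nat.factorial k) :=
  stmt10_general k hk x
end

section
/- Let w be a Catalan word of length 2k (a pair-matched word reducible to the empty word by successively deleting double letters). If w = w₁w₂ with w₁, w₂ Catalan, then Q_w(x) = Q_{w₁}(x) · Q_{w₂}(x), where Q_w is the polynomial such that p_u(w) = ∫_0^1 Q_w(v_0) dv_0 obtained by integrating out all variables except v_0 in the volume integral ∫_{[0,1]^{k+1}} 1{v_{φ(i-1)} + v_{φ(i)} ≤ 1, i ∈ S∖{0}} dv_S. -/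
open MeasureTheory

/-- A word is pair-matched if each of its letters appears exactly twice. -/
def PairMatchedWord (w : List ℕ) : Prop := ∀ a ∈ w, w.count a = 2

/-- Reducibility to the empty word by successively deleting double letters. -/
inductive DoubleReduces : List ℕ → Prop
  | nil : DoubleReduces []
  | step (u v : List ℕ) (a : ℕ) : DoubleReduces (u ++ v) → DoubleReduces (u ++ a :: a :: v)

/-- A Catalan word: pair-matched and reducible to the empty word by
successively deleting double letters. -/
def IsCatalanWord (w : List ℕ) : Prop := PairMatchedWord w ∧ DoubleReduces w

/-- The Wigner link function `L(a,b) = (min(a,b), max(a,b))`. -/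
def wignerLink (a b : ℕ) : ℕ × ℕ := (min a b, max a b)

/-- The set `Π*(w)` of circuits `π : {0,…,2k} → {1,…,n}` with `π(0) = π(2k)`
such that `w[i] = w[j]` implies `L(π(i-1),π(i)) = L(π(j-1),π(j))`.  The letter
at the paper's position `i ∈ {1,…,2k}` is the list entry `w.get? (i-1)`. -/
def PiStar (w : List ℕ) (n : ℕ) : Set (ℕ → ℕ) :=
  {π | (∀ t ≤ w.length, π t ∈ Finset.Icc 1 n) ∧ π 0 = π w.length ∧
    ∀ s t, s < w.length → t < w.length → w[s]? = w[t]? →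
      wignerLink (π s) (π (s + 1)) = wignerLink (π t) (π (t + 1))}

/-- The set `S` of generating vertices of `w`: the vertex `0` together with
those `i` at which a letter occurs for the first time. -/
def genVertices (w : List ℕ) : Finset ℕ :=
  insert 0 (((Finset.range w.length).filter
    (fun t => ∀ s < t, w[s]? ≠ w[t]?)).image (· + 1))

/-- `φ` assigns to each vertex `j` the (unique) generating vertex `φ(j) ≤ j`
with `π(j) = π(φ(j))` for every circuit `π ∈ Π*(w)`. -/
def IsPhi (w : List ℕ) (φ : ℕ → ℕ) : Prop :=
  ∀ j ≤ w.length, φ j ∈ genVertices w ∧ φ j ≤ j ∧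
    ∀ (n : ℕ) (π : ℕ → ℕ), π ∈ PiStar w n → π j = π (φ j)
/-- Extend a vector indexed by the nonzero generating vertices to all of `ℕ`,
using the value `x` at the vertex `0`. -/
def extVal (w : List ℕ) (x : ℝ) (v : ↥((genVertices w).erase 0) → ℝ) (j : ℕ) : ℝ :=
  if h : j ∈ (genVertices w).erase 0 then v ⟨j, h⟩ else x

/-- `Q_w(x)`: the result of integrating out all the variables except `v₀ = x`
in the volume integral `∫_{[0,1]^{k+1}} 1{v_{φ(i-1)} + v_{φ(i)} ≤ 1, i ∈ S∖{0}} dv_S`,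
i.e. the volume of the slice at `v₀ = x` (so that `p_u(w) = ∫₀¹ Q_w(v₀) dv₀`). -/
noncomputable def Qword (w : List ℕ) (φ : ℕ → ℕ) (x : ℝ) : ℝ :=
  (volume {v : ↥((genVertices w).erase 0) → ℝ |
    (∀ i, v i ∈ Set.Icc (0:ℝ) 1) ∧
    ∀ i ∈ genVertices w, i ≠ 0 →
      extVal w x v (φ (i - 1)) + extVal w x v (φ i) ≤ 1}).toReal

/-!
Because `w₁` is Catalan, every circuit of `w₁ w₂` returns to its starting value at the vertex
`|w₁|` (delete double letters one at a time). Hence a circuit of `w₁ w₂` restricts to a circuit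
of `w₁` and, shifted by `|w₁|`, to one of `w₂`, so `φ` agrees with `φ₁` on `w₁` and with the
shift of `φ₂` on `w₂`, where the vertex `0` of `w₂` stands for the vertex `0` of `w`. Here `φ` is
pinned down by a circuit that separates all generating vertices, built by inserting double letters
with a fresh value each time. The letters of `w₁` and `w₂` are disjoint, so the nonzero generating
vertices of `w` are those of `w₁` together with the shifted ones of `w₂`, and the constraints
defining the slice at `v₀ = x` split into those of `w₁` and those of `w₂`: the slice is a product
and its volume is the product of the volumes.
-/

theorem volume_eq_mul_of_sumElim_mem_iff {ι₁ ι₂ ι α : Type*} [Fintype ι₁] [Fintype ι₂]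
    [Fintype ι] [MeasureSpace α] [SigmaFinite (volume : Measure α)] (e : ι₁ ⊕ ι₂ ≃ ι)
    {A : Set (ι → α)} {A₁ : Set (ι₁ → α)} {A₂ : Set (ι₂ → α)}
    (hA : ∀ v₁ v₂, (fun i => Sum.elim v₁ v₂ (e.symm i)) ∈ A ↔ v₁ ∈ A₁ ∧ v₂ ∈ A₂) :
    volume A = volume A₁ * volume A₂ := by
  let Φ := (MeasurableEquiv.sumPiEquivProdPi fun _ : ι₁ ⊕ ι₂ => α).symm.trans
    (MeasurableEquiv.arrowCongr' e (MeasurableEquiv.refl α))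
  have hΦ : MeasurePreserving Φ :=
    (volume_preserving_arrowCongr' e _ (MeasurePreserving.id volume)).comp
      (volume_measurePreserving_sumPiEquivProdPi_symm _)
  have hpre : Φ ⁻¹' A = A₁ ×ˢ A₂ := Set.ext fun q => hA q.1 q.2
  rw [← hΦ.measure_preimage_equiv, hpre, Measure.volume_eq_prod, Measure.prod_prod]

theorem wignerLink_comm (a b : ℕ) : wignerLink a b = wignerLink b a := by
  simp [wignerLink, min_comm, max_comm]

theorem eq_of_wignerLink_eq {a b c : ℕ} (h : wignerLink a b = wignerLink b c) : a = c := by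
  simp only [wignerLink, Prod.mk.injEq] at h
  omega

theorem zero_mem_genVertices (w : List ℕ) : 0 ∈ genVertices w :=
  Finset.mem_insert_self _ _

theorem succ_mem_genVertices_iff {w : List ℕ} {t : ℕ} :
    t + 1 ∈ genVertices w ↔ t < w.length ∧ ∀ s < t, w[s]? ≠ w[t]? := by
  simp [genVertices]

theorem le_length_of_mem_genVertices {w : List ℕ} {j : ℕ} (h : j ∈ genVertices w) :
    j ≤ w.length := by
  obtain _ | t := j
  · exact Nat.zero_le _
  · exact (succ_mem_genVertices_iff.1 h).1

theorem PairMatchedWord.perm {l l' : List ℕ} (h : PairMatchedWord l) (hl : l.Perm l') :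
    PairMatchedWord l' := fun a ha => hl.count_eq a ▸ h a (hl.mem_iff.2 ha)

theorem PairMatchedWord.of_cons_cons {a : ℕ} {l : List ℕ} (h : PairMatchedWord (a :: a :: l)) :
    PairMatchedWord l ∧ a ∉ l := by
  have ha := h a (by simp)
  simp only [List.count_cons_self] at ha
  refine ⟨fun b hb => ?_, List.count_eq_zero.1 (by omega)⟩
  have hba : b ≠ a := by rintro rfl; exact List.count_eq_zero.1 (by omega) hb
  simpa [List.count_cons, hba.symm] using h b (by simp [hb])

theorem PairMatchedWord.of_append_cons_cons {u v : List ℕ} {a : ℕ}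
    (h : PairMatchedWord (u ++ a :: a :: v)) : PairMatchedWord (u ++ v) ∧ a ∉ u ++ v :=
  (h.perm (List.perm_middle.trans (List.perm_middle.cons a))).of_cons_cons

theorem PairMatchedWord.disjoint_of_append {w₁ w₂ : List ℕ} (h : PairMatchedWord (w₁ ++ w₂))
    (h₁ : PairMatchedWord w₁) : w₁.Disjoint w₂ := by
  intro b hb₁ hb₂
  have := h b (List.mem_append_left _ hb₁)
  rw [List.count_append, h₁ b hb₁] at this
  exact List.count_eq_zero.1 (by omega) hb₂

theorem getElem?_append_length_add {α : Type*} (l₁ l₂ : List α) (t : ℕ) :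
    (l₁ ++ l₂)[l₁.length + t]? = l₂[t]? := by
  rw [List.getElem?_append_right (by omega), Nat.add_sub_cancel_left]

/-- The link condition in the definition of `PiStar`. -/
def RespectsLinks (w : List ℕ) (π : ℕ → ℕ) : Prop :=
  ∀ s t, s < w.length → t < w.length → w[s]? = w[t]? →
    wignerLink (π s) (π (s + 1)) = wignerLink (π t) (π (t + 1))

theorem RespectsLinks.append_left {w₁ w₂ : List ℕ} {π : ℕ → ℕ}
    (h : RespectsLinks (w₁ ++ w₂) π) : RespectsLinks w₁ π := by
  intro s t hs ht hst
  refine h s t (by simp; omega) (by simp; omega) ?_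
  rwa [List.getElem?_append_left hs, List.getElem?_append_left ht]

theorem RespectsLinks.append_right {w₁ w₂ : List ℕ} {π : ℕ → ℕ}
    (h : RespectsLinks (w₁ ++ w₂) π) : RespectsLinks w₂ (fun t => π (w₁.length + t)) := by
  intro s t hs ht hst
  have := h (w₁.length + s) (w₁.length + t) (by simp; omega) (by simp; omega)
    (by rwa [getElem?_append_length_add, getElem?_append_length_add])
  simpa only [Nat.add_assoc] using this

/-- The position `s` of `u ++ v` sits at position `skipTwo u.length s` of `u ++ a :: a :: v`;
the vertex `t` of `u ++ v` becomes the vertex `skipTwo (u.length + 1) t`. -/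
def skipTwo (p s : ℕ) : ℕ := if s < p then s else s + 2

theorem skipTwo_strictMono (p : ℕ) : StrictMono (skipTwo p) := by
  intro s t h
  unfold skipTwo
  split_ifs <;> omega

theorem skipTwo_succ (p t : ℕ) : skipTwo (p + 1) (t + 1) = skipTwo p t + 1 := by
  unfold skipTwo
  split_ifs <;> omega

theorem exists_skipTwo_eq {p t : ℕ} (h₀ : t ≠ p) (h₁ : t ≠ p + 1) : ∃ s, skipTwo p s = t :=
  ⟨if t < p then t else t - 2, by unfold skipTwo; split_ifs <;> omega⟩

section DoubleLetter

variable {u v : List ℕ} {a : ℕ} {π : ℕ → ℕ}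

theorem skipTwo_lt_length_iff {s : ℕ} :
    skipTwo u.length s < (u ++ a :: a :: v).length ↔ s < (u ++ v).length := by
  simp only [skipTwo, List.length_append, List.length_cons]
  split_ifs <;> omega

theorem skipTwo_length_append :
    skipTwo u.length (u ++ v).length = (u ++ a :: a :: v).length := by
  simp only [skipTwo, List.length_append, List.length_cons]
  split_ifs <;> omega

theorem getElem?_skipTwo (s : ℕ) : (u ++ a :: a :: v)[skipTwo u.length s]? = (u ++ v)[s]? := by
  unfold skipTwo
  split_ifs with h
  · simp [List.getElem?_append_left h]
  · grind

theorem getElem?_length_append_cons_cons : (u ++ a :: a :: v)[u.length]? = some a := by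
  simp

theorem getElem?_length_succ_append_cons_cons : (u ++ a :: a :: v)[u.length + 1]? = some a := by
  simp

theorem RespectsLinks.apply_length_add_two (h : RespectsLinks (u ++ a :: a :: v) π) :
    π (u.length + 2) = π u.length :=
  (eq_of_wignerLink_eq (h _ _ (by simp) (by simp)
    (getElem?_length_append_cons_cons.trans getElem?_length_succ_append_cons_cons.symm))).symm

theorem RespectsLinks.apply_skipTwo_succ (h : RespectsLinks (u ++ a :: a :: v) π) (t : ℕ) :
    π (skipTwo (u.length + 1) t) = π (skipTwo u.length t) := by
  unfold skipTwo
  split_ifs with h₁ h₂ h₂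
  · rfl
  · rw [show t = u.length by omega, h.apply_length_add_two]
  · omega
  · rfl

theorem RespectsLinks.delete (h : RespectsLinks (u ++ a :: a :: v) π) :
    RespectsLinks (u ++ v) (π ∘ skipTwo (u.length + 1)) := by
  intro s t hs ht hst
  simp only [Function.comp, skipTwo_succ, h.apply_skipTwo_succ]
  exact h _ _ (skipTwo_lt_length_iff.2 hs) (skipTwo_lt_length_iff.2 ht)
    (by rw [getElem?_skipTwo, getElem?_skipTwo, hst])

/-- Insert a double letter into a circuit at the vertex `p`, with the new vertex carrying `m`. -/
def insertCirc (p m : ℕ) (π : ℕ → ℕ) (t : ℕ) : ℕ :=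
  if t ≤ p then π t else if t = p + 1 then m else π (t - 2)

theorem insertCirc_skipTwo_succ (p m t : ℕ) : insertCirc p m π (skipTwo (p + 1) t) = π t := by
  unfold insertCirc skipTwo
  split_ifs <;> first | rfl | omega

theorem insertCirc_skipTwo (p m t : ℕ) : insertCirc p m π (skipTwo p t) = π t := by
  unfold insertCirc skipTwo
  split_ifs <;> first | rfl | omega

theorem RespectsLinks.insert (ha : a ∉ u ++ v) (h : RespectsLinks (u ++ v) π) (m : ℕ) :
    RespectsLinks (u ++ a :: a :: v) (insertCirc u.length m π) := by
  set p := u.length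
  have hmid : ∀ r, (u ++ a :: a :: v)[r]? = some a → r = p ∨ r = p + 1 := by
    intro r hr
    by_contra hne
    obtain ⟨s, rfl⟩ := exists_skipTwo_eq (not_or.1 hne).1 (not_or.1 hne).2
    rw [getElem?_skipTwo] at hr
    exact ha (List.mem_of_getElem? hr)
  have hedge_mid : ∀ r, r = p ∨ r = p + 1 →
      wignerLink (insertCirc p m π r) (insertCirc p m π (r + 1)) = wignerLink (π p) m := by
    rintro r (rfl | rfl) <;> simp [insertCirc, wignerLink_comm m]
  have hedge_skip : ∀ s, wignerLink (insertCirc p m π (skipTwo p s))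
      (insertCirc p m π (skipTwo p s + 1)) = wignerLink (π s) (π (s + 1)) := by
    intro s
    rw [← skipTwo_succ, insertCirc_skipTwo_succ, insertCirc_skipTwo]
  have hskip : ∀ r, (u ++ a :: a :: v)[r]? ≠ some a → ∃ s, skipTwo p s = r := by
    intro r hr
    refine exists_skipTwo_eq ?_ ?_ <;> rintro rfl
    exacts [hr getElem?_length_append_cons_cons, hr getElem?_length_succ_append_cons_cons]
  intro s t hs ht hst
  by_cases hsa : (u ++ a :: a :: v)[s]? = some a
  · rw [hedge_mid s (hmid s hsa), hedge_mid t (hmid t (hst ▸ hsa))]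
  · obtain ⟨s, rfl⟩ := hskip s hsa
    obtain ⟨t, rfl⟩ := hskip t (hst ▸ hsa)
    rw [hedge_skip, hedge_skip]
    rw [getElem?_skipTwo, getElem?_skipTwo] at hst
    exact h s t (skipTwo_lt_length_iff.1 hs) (skipTwo_lt_length_iff.1 ht) hst

theorem mem_genVertices_append_cons_cons {r : ℕ} (hr : r ∈ genVertices (u ++ a :: a :: v)) :
    r = u.length + 1 ∨ ∃ g ∈ genVertices (u ++ v), r = skipTwo (u.length + 1) g := by
  obtain _ | t := r
  · exact Or.inr ⟨0, zero_mem_genVertices _, rfl⟩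
  obtain ⟨ht, hfirst⟩ := succ_mem_genVertices_iff.1 hr
  by_cases htp : t = u.length
  · exact Or.inl (by rw [htp])
  have htp' : t ≠ u.length + 1 := by
    rintro rfl
    exact hfirst _ (Nat.lt_succ_self _)
      (getElem?_length_append_cons_cons.trans getElem?_length_succ_append_cons_cons.symm)
  obtain ⟨s, rfl⟩ := exists_skipTwo_eq htp htp'
  refine Or.inr ⟨s + 1, succ_mem_genVertices_iff.2 ⟨skipTwo_lt_length_iff.1 ht, ?_⟩,
    (skipTwo_succ _ _).symm⟩
  intro s' hs'
  have := hfirst _ (skipTwo_strictMono _ hs')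
  rwa [getElem?_skipTwo, getElem?_skipTwo] at this

theorem Set.InjOn.insertCirc {m : ℕ} (hπ : Set.InjOn π (genVertices (u ++ v)))
    (hm : ∀ g ∈ genVertices (u ++ v), π g < m) :
    Set.InjOn (_root_.insertCirc u.length m π) (genVertices (u ++ a :: a :: v)) := by
  have hnew : _root_.insertCirc u.length m π (u.length + 1) = m := by simp [_root_.insertCirc]
  intro r hr r' hr' heq
  rcases mem_genVertices_append_cons_cons hr with rfl | ⟨g, hg, rfl⟩ <;>
    rcases mem_genVertices_append_cons_cons hr' with rfl | ⟨g', hg', rfl⟩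
  · rfl
  · rw [hnew, insertCirc_skipTwo_succ] at heq
    exact absurd heq (hm g' hg').ne'
  · rw [hnew, insertCirc_skipTwo_succ] at heq
    exact absurd heq (hm g hg).ne
  · rw [insertCirc_skipTwo_succ, insertCirc_skipTwo_succ] at heq
    rw [hπ hg hg' heq]

end DoubleLetter

theorem DoubleReduces.apply_length_eq {w : List ℕ} (hw : DoubleReduces w) {π : ℕ → ℕ}
    (hπ : RespectsLinks w π) : π w.length = π 0 := by
  induction hw generalizing π with
  | nil => rfl
  | step u v a _ ih =>
    calc π (u ++ a :: a :: v).length = π (skipTwo u.length (u ++ v).length) := by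
          rw [skipTwo_length_append]
      _ = π (skipTwo (u.length + 1) (u ++ v).length) := (hπ.apply_skipTwo_succ _).symm
      _ = π 0 := ih hπ.delete

theorem DoubleReduces.exists_mem_piStar_injOn {w : List ℕ} (hw : DoubleReduces w)
    (hp : PairMatchedWord w) :
    ∃ n π, π ∈ PiStar w n ∧ Set.InjOn π (genVertices w) := by
  induction hw with
  | nil => exact ⟨1, fun _ => 1, ⟨by simp, rfl, fun _ _ hs => by simp at hs⟩, by simp [genVertices]⟩
  | step u v a _ ih =>
    obtain ⟨hp', ha⟩ := hp.of_append_cons_cons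
    obtain ⟨n, π, ⟨hb, hc, hl⟩, hinj⟩ := ih hp'
    have hsub : Finset.Icc 1 n ⊆ Finset.Icc 1 (n + 1) := Finset.Icc_subset_Icc_right n.le_succ
    refine ⟨n + 1, insertCirc u.length (n + 1) π, ⟨?_, ?_, RespectsLinks.insert ha hl _⟩,
      hinj.insertCirc fun g hg => ?_⟩
    · intro t ht
      simp only [List.length_append, List.length_cons] at ht
      unfold insertCirc
      split_ifs
      · exact hsub (hb t (by simp; omega))
      · simp
      · exact hsub (hb (t - 2) (by simp; omega))
    · change insertCirc _ _ π (skipTwo (u.length + 1) 0) = _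
      rw [← skipTwo_length_append (a := a), insertCirc_skipTwo, insertCirc_skipTwo_succ, hc]
    · exact Nat.lt_succ_of_le (Finset.mem_Icc.1 (hb g (le_length_of_mem_genVertices hg))).2

theorem IsPhi.eq_of_forall_apply_eq {w : List ℕ} {φ : ℕ → ℕ} (hφ : IsPhi w φ)
    (hw : IsCatalanWord w) {j g : ℕ} (hj : j ≤ w.length) (hg : g ∈ genVertices w)
    (h : ∀ n π, π ∈ PiStar w n → π j = π g) : φ j = g := by
  obtain ⟨n, π, hπ, hinj⟩ := hw.2.exists_mem_piStar_injOn hw.1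
  obtain ⟨hφj, -, hval⟩ := hφ j hj
  exact hinj hφj hg ((hval n π hπ).symm.trans (h n π hπ))

section Append

variable {w₁ w₂ : List ℕ}

theorem DoubleReduces.mem_piStar_left_of_append (hw₁ : DoubleReduces w₁) {n : ℕ} {π : ℕ → ℕ}
    (hπ : π ∈ PiStar (w₁ ++ w₂) n) : π ∈ PiStar w₁ n := by
  obtain ⟨hb, -, hl⟩ := hπ
  exact ⟨fun t ht => hb t (by simp; omega),
    (hw₁.apply_length_eq (RespectsLinks.append_left hl)).symm, RespectsLinks.append_left hl⟩

theorem DoubleReduces.mem_piStar_right_of_append (hw₁ : DoubleReduces w₁) {n : ℕ} {π : ℕ → ℕ}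
    (hπ : π ∈ PiStar (w₁ ++ w₂) n) : (fun t => π (w₁.length + t)) ∈ PiStar w₂ n := by
  obtain ⟨hb, hc, hl⟩ := hπ
  refine ⟨fun t ht => hb _ (by simp; omega), ?_, RespectsLinks.append_right hl⟩
  simp only [Nat.add_zero, hw₁.apply_length_eq (RespectsLinks.append_left hl), hc,
    List.length_append]

theorem mem_genVertices_append_left {j : ℕ} (h : j ∈ genVertices w₁) :
    j ∈ genVertices (w₁ ++ w₂) := by
  obtain _ | t := j
  · exact zero_mem_genVertices _
  obtain ⟨ht, hfirst⟩ := succ_mem_genVertices_iff.1 h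
  refine succ_mem_genVertices_iff.2 ⟨by simp; omega, fun s hs => ?_⟩
  rw [List.getElem?_append_left (hs.trans ht), List.getElem?_append_left ht]
  exact hfirst s hs

theorem add_mem_genVertices_append (hd : w₁.Disjoint w₂) {j : ℕ} (h : j ∈ genVertices w₂)
    (hj : j ≠ 0) : w₁.length + j ∈ genVertices (w₁ ++ w₂) := by
  obtain _ | t := j
  · exact absurd rfl hj
  obtain ⟨ht, hfirst⟩ := succ_mem_genVertices_iff.1 h
  rw [← Nat.add_assoc, succ_mem_genVertices_iff]
  refine ⟨by simp; omega, fun s hs => ?_⟩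
  rw [getElem?_append_length_add]
  by_cases hs₁ : s < w₁.length
  · rw [List.getElem?_append_left hs₁, List.getElem?_eq_getElem ht]
    exact fun hc => hd (List.mem_of_getElem? hc) (List.getElem_mem ht)
  · obtain ⟨s, rfl⟩ := Nat.exists_eq_add_of_le (Nat.le_of_not_lt hs₁)
    rw [getElem?_append_length_add]
    exact hfirst _ (by omega)

theorem mem_genVertices_append {j : ℕ} (h : j ∈ genVertices (w₁ ++ w₂)) (hj : j ≠ 0) :
    j ∈ genVertices w₁ ∨ ∃ i ∈ genVertices w₂, i ≠ 0 ∧ j = w₁.length + i := by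
  obtain _ | t := j
  · exact absurd rfl hj
  obtain ⟨ht, hfirst⟩ := succ_mem_genVertices_iff.1 h
  by_cases ht₁ : t < w₁.length
  · refine Or.inl (succ_mem_genVertices_iff.2 ⟨ht₁, fun s hs => ?_⟩)
    have := hfirst s hs
    rwa [List.getElem?_append_left (hs.trans ht₁), List.getElem?_append_left ht₁] at this
  · refine Or.inr ⟨t - w₁.length + 1, succ_mem_genVertices_iff.2 ⟨by simp at ht; omega, ?_⟩,
      by omega, by omega⟩
    intro s hs
    have := hfirst (w₁.length + s) (by omega)
    rwa [getElem?_append_length_add, show t = w₁.length + (t - w₁.length) by omega,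
      getElem?_append_length_add] at this

theorem forall_mem_genVertices_append (hd : w₁.Disjoint w₂) {P : ℕ → Prop} :
    (∀ i ∈ genVertices (w₁ ++ w₂), i ≠ 0 → P i) ↔
      (∀ i ∈ genVertices w₁, i ≠ 0 → P i) ∧
        ∀ i ∈ genVertices w₂, i ≠ 0 → P (w₁.length + i) := by
  refine ⟨fun h => ⟨fun i hi hi₀ => h i (mem_genVertices_append_left hi) hi₀,
    fun i hi hi₀ => h _ (add_mem_genVertices_append hd hi hi₀) (by omega)⟩, ?_⟩
  rintro ⟨h₁, h₂⟩ i hi hi₀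
  rcases mem_genVertices_append hi hi₀ with hi₁ | ⟨i, hi₂, hi₀', rfl⟩
  exacts [h₁ i hi₁ hi₀, h₂ i hi₂ hi₀']

theorem IsPhi.append_left {φ φ₁ : ℕ → ℕ} (hφ : IsPhi (w₁ ++ w₂) φ) (hw : IsCatalanWord (w₁ ++ w₂))
    (hφ₁ : IsPhi w₁ φ₁) (hw₁ : DoubleReduces w₁) {j : ℕ} (hj : j ≤ w₁.length) : φ j = φ₁ j :=
  hφ.eq_of_forall_apply_eq hw (by simp; omega) (mem_genVertices_append_left (hφ₁ j hj).1)
    fun n π hπ => (hφ₁ j hj).2.2 n π (hw₁.mem_piStar_left_of_append hπ)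

theorem IsPhi.append_right {φ φ₂ : ℕ → ℕ} (hφ : IsPhi (w₁ ++ w₂) φ)
    (hw : IsCatalanWord (w₁ ++ w₂)) (hw₁ : IsCatalanWord w₁) (hφ₂ : IsPhi w₂ φ₂) {j : ℕ}
    (hj : j ≤ w₂.length) :
    φ (w₁.length + j) = if φ₂ j = 0 then 0 else w₁.length + φ₂ j := by
  obtain ⟨hg, -, hval⟩ := hφ₂ j hj
  have hshift : ∀ n π, π ∈ PiStar (w₁ ++ w₂) n → π (w₁.length + j) = π (w₁.length + φ₂ j) :=
    fun n π hπ => hval n _ (hw₁.2.mem_piStar_right_of_append hπ)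
  refine hφ.eq_of_forall_apply_eq hw (by simp; omega) ?_ fun n π hπ => ?_ <;>
    split_ifs with h₀
  · exact zero_mem_genVertices _
  · exact add_mem_genVertices_append (hw.1.disjoint_of_append hw₁.1) hg h₀
  · rw [hshift n π hπ, h₀, Nat.add_zero, hw₁.2.apply_length_eq (RespectsLinks.append_left hπ.2.2)]
  · exact hshift n π hπ

/-- The nonzero generating vertices of `w₁ ++ w₂` are those of `w₁` and, shifted by `|w₁|`,
those of `w₂`. -/
noncomputable def appendVertexEquiv (hd : w₁.Disjoint w₂) :
    ↥((genVertices w₁).erase 0) ⊕ ↥((genVertices w₂).erase 0) ≃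
      ↥((genVertices (w₁ ++ w₂)).erase 0) :=
  Equiv.ofBijective
    (Sum.elim
      (fun i => ⟨i, Finset.mem_erase_of_ne_of_mem (Finset.ne_of_mem_erase i.2)
        (mem_genVertices_append_left (Finset.mem_of_mem_erase i.2))⟩)
      (fun i => ⟨w₁.length + i, Finset.mem_erase_of_ne_of_mem
        (by have := Finset.ne_of_mem_erase i.2; omega)
        (add_mem_genVertices_append hd (Finset.mem_of_mem_erase i.2) (Finset.ne_of_mem_erase i.2))⟩))
    (by
      refine ⟨Function.Injective.sumElim (fun i i' h => Subtype.ext (Subtype.mk.inj h))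
        (fun i i' h => Subtype.ext (Nat.add_left_cancel (Subtype.mk.inj h))) ?_, ?_⟩
      · rintro ⟨i, hi⟩ ⟨i', hi'⟩ h
        have h₁ := le_length_of_mem_genVertices (Finset.mem_of_mem_erase hi)
        have h₂ := Finset.ne_of_mem_erase hi'
        simp only [Subtype.mk.injEq] at h
        omega
      · rintro ⟨j, hj⟩
        obtain ⟨hj₀, hj⟩ := Finset.mem_erase.1 hj
        rcases mem_genVertices_append hj hj₀ with hj₁ | ⟨i, hi, hi₀, rfl⟩
        · exact ⟨Sum.inl ⟨j, Finset.mem_erase.2 ⟨hj₀, hj₁⟩⟩, rfl⟩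
        · exact ⟨Sum.inr ⟨i, Finset.mem_erase.2 ⟨hi₀, hi⟩⟩, rfl⟩)

variable (hd : w₁.Disjoint w₂) (x : ℝ) (v₁ : ↥((genVertices w₁).erase 0) → ℝ)
  (v₂ : ↥((genVertices w₂).erase 0) → ℝ)

theorem extVal_append_left {g : ℕ} (hg : g ∈ genVertices w₁) :
    extVal (w₁ ++ w₂) x (fun i => Sum.elim v₁ v₂ ((appendVertexEquiv hd).symm i)) g =
      extVal w₁ x v₁ g := by
  by_cases hg₀ : g = 0
  · simp [extVal, hg₀]
  have hg₁ : g ∈ (genVertices w₁).erase 0 := Finset.mem_erase.2 ⟨hg₀, hg⟩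
  have hgv : (⟨g, _⟩ : ↥((genVertices (w₁ ++ w₂)).erase 0)) =
      appendVertexEquiv hd (Sum.inl ⟨g, hg₁⟩) := rfl
  have hmem : g ∈ (genVertices (w₁ ++ w₂)).erase 0 := (appendVertexEquiv hd (Sum.inl ⟨g, hg₁⟩)).2
  rw [extVal, dif_pos hmem, hgv,
    Equiv.symm_apply_apply, extVal, dif_pos hg₁, Sum.elim_inl]

theorem extVal_append_right {g : ℕ} (hg : g ∈ genVertices w₂) :
    extVal (w₁ ++ w₂) x (fun i => Sum.elim v₁ v₂ ((appendVertexEquiv hd).symm i))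
        (if g = 0 then 0 else w₁.length + g) = extVal w₂ x v₂ g := by
  split_ifs with hg₀
  · simp [extVal, hg₀]
  have hg₂ : g ∈ (genVertices w₂).erase 0 := Finset.mem_erase.2 ⟨hg₀, hg⟩
  have hgv : (⟨w₁.length + g, _⟩ : ↥((genVertices (w₁ ++ w₂)).erase 0)) =
      appendVertexEquiv hd (Sum.inr ⟨g, hg₂⟩) := rfl
  have hmem : w₁.length + g ∈ (genVertices (w₁ ++ w₂)).erase 0 :=
    (appendVertexEquiv hd (Sum.inr ⟨g, hg₂⟩)).2
  rw [extVal, dif_pos hmem, hgv,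
    Equiv.symm_apply_apply, extVal, dif_pos hg₂, Sum.elim_inr]

end Append

/-- The slice at `v₀ = x` whose volume is `Qword w φ x`. -/
def qwordSet (w : List ℕ) (φ : ℕ → ℕ) (x : ℝ) : Set (↥((genVertices w).erase 0) → ℝ) :=
  {v | (∀ i, v i ∈ Set.Icc (0:ℝ) 1) ∧
    ∀ i ∈ genVertices w, i ≠ 0 → extVal w x v (φ (i - 1)) + extVal w x v (φ i) ≤ 1}

theorem sumElim_mem_qwordSet_append_iff {w₁ w₂ : List ℕ} {φ φ₁ φ₂ : ℕ → ℕ}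
    (hw : IsCatalanWord (w₁ ++ w₂)) (hw₁ : IsCatalanWord w₁) (hφ : IsPhi (w₁ ++ w₂) φ)
    (hφ₁ : IsPhi w₁ φ₁) (hφ₂ : IsPhi w₂ φ₂) (x : ℝ) (v₁ : ↥((genVertices w₁).erase 0) → ℝ)
    (v₂ : ↥((genVertices w₂).erase 0) → ℝ) :
    (fun i => Sum.elim v₁ v₂ ((appendVertexEquiv (hw.1.disjoint_of_append hw₁.1)).symm i)) ∈
        qwordSet (w₁ ++ w₂) φ x ↔ v₁ ∈ qwordSet w₁ φ₁ x ∧ v₂ ∈ qwordSet w₂ φ₂ x := by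
  set hd := hw.1.disjoint_of_append hw₁.1
  set e := appendVertexEquiv hd
  set v := fun i => Sum.elim v₁ v₂ (e.symm i)
  have hbox : (∀ i, v i ∈ Set.Icc (0:ℝ) 1) ↔
      (∀ i, v₁ i ∈ Set.Icc (0:ℝ) 1) ∧ ∀ i, v₂ i ∈ Set.Icc (0:ℝ) 1 := by
    rw [← e.forall_congr_right, Sum.forall]
    simp only [v, Equiv.symm_apply_apply, Sum.elim_inl, Sum.elim_inr]
  have hval₁ : ∀ j ≤ w₁.length, extVal (w₁ ++ w₂) x v (φ j) = extVal w₁ x v₁ (φ₁ j) :=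
    fun j hj => by
      rw [hφ.append_left hw hφ₁ hw₁.2 hj]
      exact extVal_append_left hd x v₁ v₂ (hφ₁ j hj).1
  have hval₂ : ∀ j ≤ w₂.length,
      extVal (w₁ ++ w₂) x v (φ (w₁.length + j)) = extVal w₂ x v₂ (φ₂ j) := fun j hj => by
    rw [hφ.append_right hw hw₁ hφ₂ hj]
    exact extVal_append_right hd x v₁ v₂ (hφ₂ j hj).1
  simp only [qwordSet, Set.mem_ofPred_eq, hbox, forall_mem_genVertices_append hd]
  rw [and_and_and_comm]
  refine and_congr (and_congr_right fun _ => ?_) (and_congr_right fun _ => ?_) <;>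
    refine forall₂_congr fun i hi => imp_congr_right fun hi₀ => ?_
  · have := le_length_of_mem_genVertices hi
    rw [hval₁ i this, hval₁ (i - 1) (by omega)]
  · have := le_length_of_mem_genVertices hi
    rw [show w₁.length + i - 1 = w₁.length + (i - 1) by omega, hval₂ i this,
      hval₂ (i - 1) (by omega)]

theorem stmt12_general (w w₁ w₂ : List ℕ) (hw : w = w₁ ++ w₂)
    (hcat : IsCatalanWord w) (hcat₁ : IsCatalanWord w₁)
    (φ φ₁ φ₂ : ℕ → ℕ) (hφ : IsPhi w φ) (hφ₁ : IsPhi w₁ φ₁) (hφ₂ : IsPhi w₂ φ₂)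
    (x : ℝ) :
    Qword w φ x = Qword w₁ φ₁ x * Qword w₂ φ₂ x := by
  subst hw
  change (volume (qwordSet _ φ x)).toReal =
    (volume (qwordSet _ φ₁ x)).toReal * (volume (qwordSet _ φ₂ x)).toReal
  rw [← ENNReal.toReal_mul, volume_eq_mul_of_sumElim_mem_iff _
    (sumElim_mem_qwordSet_append_iff hcat hcat₁ hφ hφ₁ hφ₂ x)]

/-- If the Catalan word `w` factors as `w = w₁ w₂` with `w₁, w₂` Catalan, then
`Q_w(x) = Q_{w₁}(x) · Q_{w₂}(x)`. -/
theorem stmt12 (k : ℕ) (w w₁ w₂ : List ℕ) (hw : w = w₁ ++ w₂)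
    (hlen : w.length = 2 * k)
    (hcat : IsCatalanWord w) (hcat₁ : IsCatalanWord w₁) (hcat₂ : IsCatalanWord w₂)
    (φ φ₁ φ₂ : ℕ → ℕ) (hφ : IsPhi w φ) (hφ₁ : IsPhi w₁ φ₁) (hφ₂ : IsPhi w₂ φ₂)
    (x : ℝ) (hx : x ∈ Set.Icc (0:ℝ) 1) :
    Qword w φ x = Qword w₁ φ₁ x * Qword w₂ φ₂ x :=
  stmt12_general w w₁ w₂ hw hcat hcat₁ φ φ₁ φ₂ hφ hφ₁ hφ₂ x
end

section
/- Let w be a Catalan word of length 2k and let π : {0,1,...,2k} → {1,...,n} be any function such that whenever w[i] = w[j] with i < j, one has (π(i-1), π(i)) = (π(j), π(j-1)). Then π(0) = π(2k). -/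
/-!
Induct on the reduction of `w` to the empty word. If `w = u ++ a a ++ v`, the two
occurrences of `a` sit at adjacent positions `m = |u|` and `m + 1`, so the hypothesis
gives `π m = π (m + 2)`: the walk `π` goes out along an edge and straight back. Cutting out
this detour, i.e. precomposing `π` with the map skipping `m, m + 1`, yields a walk of the same
kind along `u ++ v` with the same endpoints.
-/

open MeasureTheory

def RetracesMatchedSteps {β : Type*} (w : List ℕ) (π : ℕ → β) : Prop :=
  ∀ s t, s < w.length → t < w.length → s ≠ t → w[s]? = w[t]? →
    (π s, π (s + 1)) = (π (t + 1), π t)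

-- Reindexes `u ++ v` into `u ++ a :: a :: v` when `m = u.length`.
def skipPair (m t : ℕ) : ℕ := if t < m then t else t + 2

lemma skipPair_injective (m : ℕ) : Function.Injective (skipPair m) := by
  intro s t h
  unfold skipPair at h
  split_ifs at h <;> omega

lemma getElem?_append_eq_getElem?_skipPair {α : Type*} (u v : List α) (a : α) (p : ℕ) :
    (u ++ v)[p]? = (u ++ a :: a :: v)[skipPair u.length p]? := by
  unfold skipPair
  split_ifs with h
  · rw [List.getElem?_append_left h, List.getElem?_append_left h]
  · rw [List.getElem?_append_right (by omega), List.getElem?_append_right (by omega),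
      show p + 2 - u.length = (p - u.length) + 1 + 1 by omega]
    simp

section Detour

variable {β : Type*} {π : ℕ → β} {m : ℕ}

lemma apply_skipPair_zero (hπ : π m = π (m + 2)) : π (skipPair m 0) = π 0 := by
  unfold skipPair
  split_ifs with h
  · rfl
  · obtain rfl : m = 0 := by omega
    exact hπ.symm

lemma apply_skipPair_succ (hπ : π m = π (m + 2)) (p : ℕ) :
    π (skipPair m (p + 1)) = π (skipPair m p + 1) := by
  unfold skipPair
  by_cases h : p + 1 < m
  · rw [if_pos h, if_pos (by omega)]
  · by_cases h' : p < m
    · rw [if_neg h, if_pos h', show p + 1 = m by omega, hπ]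
    · rw [if_neg h, if_neg h']

end Detour

lemma RetracesMatchedSteps.apply_eq_of_adjacent {β : Type*} {u v : List ℕ} {a : ℕ}
    {π : ℕ → β} (h : RetracesMatchedSteps (u ++ a :: a :: v) π) :
    π u.length = π (u.length + 2) := by
  have hm : (u ++ a :: a :: v)[u.length]? = some a := by simp
  have hm₁ : (u ++ a :: a :: v)[u.length + 1]? = some a := by
    rw [List.getElem?_append_right (by omega)]; simp
  have := h u.length (u.length + 1) (by simp) (by simp) (by omega) (hm.trans hm₁.symm)
  exact congrArg Prod.fst this

lemma RetracesMatchedSteps.comp_skipPair {β : Type*} {u v : List ℕ} {a : ℕ} {π : ℕ → β}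
    (h : RetracesMatchedSteps (u ++ a :: a :: v) π) :
    RetracesMatchedSteps (u ++ v) (π ∘ skipPair u.length) := by
  have hdetour := h.apply_eq_of_adjacent
  have hlt : ∀ p < (u ++ v).length, skipPair u.length p < (u ++ a :: a :: v).length := by
    intro p hp
    simp only [List.length_append, List.length_cons] at hp ⊢
    unfold skipPair
    split_ifs <;> omega
  intro s t hs ht hne hst
  simp only [Function.comp_apply, apply_skipPair_succ hdetour]
  refine h _ _ (hlt s hs) (hlt t ht) ((skipPair_injective _).ne hne) ?_
  rwa [← getElem?_append_eq_getElem?_skipPair, ← getElem?_append_eq_getElem?_skipPair]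

theorem DoubleReduces.apply_zero_eq_apply_length {β : Type*} {w : List ℕ}
    (hw : DoubleReduces w) {π : ℕ → β} (hπ : RetracesMatchedSteps w π) :
    π 0 = π w.length := by
  induction hw generalizing π with
  | nil => rfl
  | step u v a _ ih =>
    have hdetour := hπ.apply_eq_of_adjacent
    have hend : skipPair u.length (u ++ v).length = (u ++ a :: a :: v).length := by
      simp [skipPair]; omega
    calc π 0 = π (skipPair u.length 0) := (apply_skipPair_zero hdetour).symm
      _ = π (skipPair u.length (u ++ v).length) := ih hπ.comp_skipPair
      _ = π (u ++ a :: a :: v).length := by rw [hend]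

/-- If `w` is a Catalan word of length `2k` and `π : {0,…,2k} → {1,…,n}` is
any function such that `w[i] = w[j]` (`i ≠ j`) implies
`(π(i-1), π(i)) = (π(j), π(j-1))`, then `π(0) = π(2k)`.  (In the `0`-based
list indexing, positions `s = i-1`, `t = j-1`.) -/
theorem stmt18 (k : ℕ) (w : List ℕ) (hw : w.length = 2 * k)
    (hcat : IsCatalanWord w) (π : ℕ → ℕ)
    (hπ : ∀ s t, s < w.length → t < w.length → s ≠ t → w[s]? = w[t]? →
      (π s, π (s + 1)) = (π (t + 1), π t)) :
    π 0 = π (2 * k) :=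
  hw ▸ hcat.2.apply_zero_eq_apply_length hπ
end
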